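/- arXiv:2112.09830 — 2 statements merged into one kernel-verified Lean document; each statement's English description precedes it below -/
import Mathlib

section
/- A set X ⊆ 2^ω is a σ-set (every relatively G_δ subset of X is relatively F_σ in X) if and only if X is an 'almost Q-set', i.e., for every W ⊆ 2^{<ω}, the set {x ∈ X : x↾n ∈ W for infinitely many n} is an F_σ subset of X. -/
open Set Topology

/-- The length-n initial segment of x : ℕ → Bool as a finite binary sequence. -/
def res (x : ℕ → Bool) (n : ℕ) : List Bool := (List.range n).map x

/-- The branch a_x = {x↾n : n ∈ ω} ⊆ 2^{<ω}. -/
def branch (x : ℕ → Bool) : Set (List Bool) := Set.range (res x)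

/-- Y is a relative G_δ subset of X. -/
def IsRelGdelta {α : Type*} [TopologicalSpace α] (X Y : Set α) : Prop :=
  ∃ U : ℕ → Set α, (∀ n, IsOpen (U n)) ∧ Y = X ∩ ⋂ n, U n

/-- Y is a relative F_σ subset of X. -/
def IsRelFsigma {α : Type*} [TopologicalSpace α] (X Y : Set α) : Prop :=
  ∃ C : ℕ → Set α, (∀ n, IsClosed (C n)) ∧ Y = X ∩ ⋃ n, C n

/-- Z is a weak λ-set. -/
def IsWeakLambda {α : Type*} [TopologicalSpace α] (Z : Set α) : Prop :=
  ∀ Y W : Set α, Y ⊆ Z → W ⊆ Z → Y.Countable → W.Countable → Disjoint Y W →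
    ∃ H ⊆ Z, IsRelGdelta Z H ∧ IsRelFsigma Z H ∧ Y ⊆ H ∧ W ⊆ Z \ H

/-- S is an F_σ subset of the whole space. -/
def IsFsigma {α : Type*} [TopologicalSpace α] (S : Set α) : Prop :=
  ∃ C : ℕ → Set α, (∀ n, IsClosed (C n)) ∧ S = ⋃ n, C n

/-!
The sets `{x | x↾m ∈ W for infinitely many m}` are exactly the G_δ subsets of `2^ω`, so both
conditions say that every relative G_δ subset of `X` is relative F_σ. Such a set is
`⋂ N, ⋃ m ≥ N, {x | x↾m ∈ W}`. Conversely, write a G_δ set as `⋂ k, V k` with `V` a decreasing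
sequence of open sets, and let the depth of `x` at `n` be the largest `k ≤ n` with `[x↾n] ⊆ V k`.
The depth is nondecreasing in `n` and tends to infinity exactly when `x ∈ ⋂ k, V k`, so one takes
for `W` the strings at whose last step the depth increases.
-/

open Filter

lemma isRelGdelta_iff {α : Type*} [TopologicalSpace α] {X Y : Set α} :
    IsRelGdelta X Y ↔ ∃ G, IsGδ G ∧ Y = X ∩ G := by
  simp only [IsRelGdelta, isGδ_iff_eq_iInter_nat]
  constructor
  · rintro ⟨U, hU, rfl⟩
    exact ⟨_, ⟨U, hU, rfl⟩, rfl⟩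
  · rintro ⟨_, ⟨U, hU, rfl⟩, rfl⟩
    exact ⟨U, hU, rfl⟩

lemma length_res (x : ℕ → Bool) (n : ℕ) : (res x n).length = n := by
  simp [res]

lemma res_eq_res_iff {x y : ℕ → Bool} {n : ℕ} : res y n = res x n ↔ y ∈ PiNat.cylinder x n := by
  simp [res, List.map_inj_left]

lemma res_eq_ofFn (x : ℕ → Bool) (n : ℕ) : res x n = List.ofFn fun i : Fin n => x i := by
  rw [res, List.ofFn_eq_map, ← List.map_coe_finRange_eq_range, List.map_map]
  rfl

lemma continuous_res (n : ℕ) : Continuous fun x : ℕ → Bool => res x n := by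
  simp only [res_eq_ofFn]
  exact (continuous_of_discreteTopology : Continuous (List.ofFn : (Fin n → Bool) → List Bool)).comp
    (by fun_prop)

lemma frequently_lt_succ_iff_tendsto {f : ℕ → ℕ} (hf : Monotone f) :
    (∃ᶠ n in atTop, f n < f (n + 1)) ↔ Tendsto f atTop atTop := by
  constructor
  · intro h
    refine tendsto_atTop_atTop_of_monotone hf fun b => ?_
    induction b with
    | zero => exact ⟨0, Nat.zero_le _⟩
    | succ b ih =>
      obtain ⟨a, ha⟩ := ih
      obtain ⟨n, han, hn⟩ := frequently_atTop.1 h a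
      exact ⟨n + 1, by have := hf han; omega⟩
  · intro h hfin
    obtain ⟨N, hN⟩ := eventually_atTop.1 hfin
    have hconst : ∀ n ≥ N, f n ≤ f N := by
      intro n hn
      induction n, hn using Nat.le_induction with
      | base => exact le_rfl
      | succ n hn ih => exact (not_lt.1 (hN n hn)).trans ih
    obtain ⟨n, hn⟩ := ((h.eventually_gt_atTop (f N)).and (eventually_ge_atTop N)).exists
    exact absurd (hconst n hn.2) (not_le.2 hn.1)

lemma frequently_atTop_succ_iff {p : ℕ → Prop} :
    (∃ᶠ n in atTop, p (n + 1)) ↔ ∃ᶠ n in atTop, p n := by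
  rw [← frequently_map (m := fun n => n + 1), map_add_atTop_eq_nat]

lemma isGδ_setOf_infinite_res_mem (W : Set (List Bool)) :
    IsGδ {x | {m | res x m ∈ W}.Infinite} := by
  have : {x | {m | res x m ∈ W}.Infinite} = ⋂ N, ⋃ m ≥ N, (res · m) ⁻¹' W := by
    ext x
    simp [← Nat.frequently_atTop_iff_infinite, frequently_atTop]
  rw [this]
  exact .iInter fun N => IsOpen.isGδ <| isOpen_biUnion fun m _ =>
    (isOpen_discrete W).preimage (continuous_res m)

section cylinderDepth

variable {E : ℕ → Type*}

lemma exists_cylinder_subset [∀ n, TopologicalSpace (E n)] [∀ n, DiscreteTopology (E n)]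
    {V : Set (∀ n, E n)} {x : ∀ n, E n} (hV : IsOpen V) (hx : x ∈ V) : ∃ n, PiNat.cylinder x n ⊆ V := by
  obtain ⟨_, ⟨y, n, rfl⟩, hxy, hyV⟩ :=
    (PiNat.isTopologicalBasis_cylinders E).exists_subset_of_mem_open hx hV
  exact ⟨n, PiNat.mem_cylinder_iff_eq.1 hxy ▸ hyV⟩

open Classical

noncomputable def cylinderDepth (V : ℕ → Set (∀ n, E n)) (x : ∀ n, E n) (n : ℕ) : ℕ :=
  Nat.findGreatest (fun k => PiNat.cylinder x n ⊆ V k) n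

variable {V : ℕ → Set (∀ n, E n)}

lemma cylinderDepth_congr {x y : ∀ n, E n} {n : ℕ} (h : x ∈ PiNat.cylinder y n) :
    cylinderDepth V x n = cylinderDepth V y n := by
  rw [cylinderDepth, cylinderDepth, PiNat.mem_cylinder_iff_eq.1 h]

lemma monotone_cylinderDepth (x : ∀ n, E n) : Monotone (cylinderDepth V x) :=
  monotone_nat_of_le_succ fun n =>
    Nat.findGreatest_mono (fun _ hk => (PiNat.cylinder_anti x n.le_succ).trans hk) n.le_succ

lemma tendsto_cylinderDepth_iff [∀ n, TopologicalSpace (E n)] [∀ n, DiscreteTopology (E n)]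
    (hV : ∀ k, IsOpen (V k)) (hV' : Antitone V) (x : ∀ n, E n) :
    Tendsto (cylinderDepth V x) atTop atTop ↔ x ∈ ⋂ k, V k := by
  refine ⟨fun h => mem_iInter.2 fun k => ?_, fun hx => ?_⟩
  · obtain ⟨n, hn⟩ := (h.eventually_gt_atTop k).exists
    have hsub : PiNat.cylinder x n ⊆ V (cylinderDepth V x n) :=
      Nat.findGreatest_of_ne_zero rfl (k.zero_le.trans_lt hn).ne'
    exact hV' hn.le (hsub (PiNat.self_mem_cylinder x n))
  · refine tendsto_atTop_atTop_of_monotone (monotone_cylinderDepth x) fun k => ?_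
    obtain ⟨n, hn⟩ := exists_cylinder_subset (hV k) (mem_iInter.1 hx k)
    exact ⟨max n k, Nat.le_findGreatest (le_max_right n k)
      ((PiNat.cylinder_anti x (le_max_left n k)).trans hn)⟩

end cylinderDepth

def depthIncrements (V : ℕ → Set (ℕ → Bool)) : Set (List Bool) :=
  {s | ∃ x n, res x (n + 1) = s ∧ cylinderDepth V x n < cylinderDepth V x (n + 1)}

lemma res_succ_mem_depthIncrements_iff {V : ℕ → Set (ℕ → Bool)} {x : ℕ → Bool} {n : ℕ} :
    res x (n + 1) ∈ depthIncrements V ↔ cylinderDepth V x n < cylinderDepth V x (n + 1) := by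
  refine ⟨fun ⟨y, m, hyx, hy⟩ => ?_, fun h => ⟨x, n, rfl, h⟩⟩
  obtain rfl : m = n := by simpa [length_res] using congrArg List.length hyx
  have hy' : y ∈ PiNat.cylinder x (m + 1) := res_eq_res_iff.1 hyx
  rwa [← cylinderDepth_congr hy', ← cylinderDepth_congr (PiNat.cylinder_anti x m.le_succ hy')]

lemma IsGδ.exists_eq_setOf_infinite_res_mem {G : Set (ℕ → Bool)} (hG : IsGδ G) :
    ∃ W : Set (List Bool), G = {x | {m | res x m ∈ W}.Infinite} := by
  obtain ⟨U, hU, rfl⟩ := hG.eq_iInter_nat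
  set V : ℕ → Set (ℕ → Bool) := fun k => ⋂ j ≤ k, U j
  have hV : ∀ k, IsOpen (V k) := fun k => (finite_le_nat k).isOpen_biInter fun j _ => hU j
  have hV' : Antitone V := fun a b hab => iInter₂_mono' fun j hj => ⟨j, hj.trans hab, subset_rfl⟩
  refine ⟨depthIncrements V, ?_⟩
  ext x
  rw [← biInter_le_eq_iInter, mem_ofPred_eq, ← Nat.frequently_atTop_iff_infinite,
    ← frequently_atTop_succ_iff]
  simp only [res_succ_mem_depthIncrements_iff]
  rw [frequently_lt_succ_iff_tendsto (monotone_cylinderDepth x),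
    tendsto_cylinderDepth_iff hV hV']

theorem stmt4 (X : Set (ℕ → Bool)) :
    (∀ Y, IsRelGdelta X Y → IsRelFsigma X Y) ↔
      (∀ W : Set (List Bool), IsRelFsigma X {x ∈ X | {m | res x m ∈ W}.Infinite}) := by
  constructor
  · intro hσ W
    exact hσ _ (isRelGdelta_iff.2 ⟨_, isGδ_setOf_infinite_res_mem W, rfl⟩)
  · intro hQ Y hY
    obtain ⟨G, hG, rfl⟩ := isRelGdelta_iff.1 hY
    obtain ⟨W, rfl⟩ := hG.exists_eq_setOf_infinite_res_mem
    exact hQ W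
end

section
/- Let X ⊆ 2^ω and Y, Z ⊆ X be disjoint subsets such that there exists an F ⊆ 2^ω that is simultaneously F_σ and G_δ in 2^ω with Y ⊆ F∩X and Z ⊆ X∖F. Then there exists W ⊆ 2^{<ω} with {y↾n : n∈ω} ⊆* W for all y ∈ Y and {z↾n : n∈ω} ∩ W finite for all z ∈ Z. -/
open Set Topology

/-!
Write `F = ⋃ Cₙ` and `Fᶜ = ⋃ Dₙ` with increasing closed `Cₙ`, `Dₙ`. Since `Cₙ` is compact and
disjoint from `Dₙ`, there is a level `mₙ` at which every point of `Cₙ` splits off from every point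
of `Dₙ`. Let `W` consist of the restrictions `x↾k` with `x ∈ Cₙ` and `k ≥ mₙ`. A branch through
`Cₙ₀` lies in `W` from level `mₙ₀` on; a branch through `Dₙ₀` can meet `W` only below `mₙ₀`,
since a meeting through `Cₙ` at a level `k ≥ mₙ` would contradict the separation of
`C (max n n₀)` from `D (max n n₀)`.
-/

lemma exists_forall_disjoint_cylinder {E : ℕ → Type*} [∀ n, TopologicalSpace (E n)]
    [∀ n, DiscreteTopology (E n)] {C D : Set (∀ n, E n)} (hC : IsCompact C) (hD : IsClosed D)
    (hCD : Disjoint C D) : ∃ m, ∀ x ∈ C, Disjoint D (PiNat.cylinder x m) := by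
  choose! n hn using fun x (hx : x ∈ C) =>
    PiNat.exists_disjoint_cylinder hD (hCD.notMem_of_mem_left hx)
  obtain ⟨t, htC, hcover⟩ := hC.elim_nhds_subcover (fun x => PiNat.cylinder x (n x))
    fun x _ => (PiNat.isOpen_cylinder _ x _).mem_nhds (PiNat.self_mem_cylinder x _)
  refine ⟨t.sup n, fun x hx => ?_⟩
  obtain ⟨x₀, hx₀t, hxx₀⟩ := mem_iUnion₂.1 (hcover hx)
  refine (hn x₀ (htC x₀ hx₀t)).mono_right ?_
  rw [← PiNat.mem_cylinder_iff_eq.1 hxx₀]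
  exact PiNat.cylinder_anti x (Finset.le_sup hx₀t)

lemma res_length (x : ℕ → Bool) (k : ℕ) : (res x k).length = k := by
  simp [res]

lemma res_eq_res_iff_mem_cylinder {x y : ℕ → Bool} {k : ℕ} :
    res x k = res y k ↔ y ∈ PiNat.cylinder x k := by
  simp [res, List.map_inj_left, PiNat.mem_cylinder_iff, eq_comm]

lemma finite_branch_inter_of_forall_ge {x : ℕ → Bool} {S : Set (List Bool)} {m : ℕ}
    (h : ∀ k ≥ m, res x k ∉ S) : (branch x ∩ S).Finite := by
  refine ((finite_Iio m).image (res x)).subset ?_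
  rintro _ ⟨⟨k, rfl⟩, hk⟩
  exact ⟨k, not_le.1 fun hmk => h k hmk hk, rfl⟩

lemma exists_separating_of_monotone_isClosed {C D : ℕ → Set (ℕ → Bool)}
    (hC : ∀ n, IsClosed (C n)) (hD : ∀ n, IsClosed (D n)) (hCm : Monotone C) (hDm : Monotone D)
    (hCD : ∀ n, Disjoint (C n) (D n)) :
    ∃ W : Set (List Bool),
      (∀ y ∈ ⋃ n, C n, (branch y \ W).Finite) ∧ (∀ z ∈ ⋃ n, D n, (branch z ∩ W).Finite) := by
  choose m hm using fun n => exists_forall_disjoint_cylinder (hC n).isCompact (hD n) (hCD n)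
  refine ⟨{s | ∃ n, ∃ x ∈ C n, m n ≤ s.length ∧ res x s.length = s}, ?_, ?_⟩
  · intro y hy
    obtain ⟨n, hyn⟩ := mem_iUnion.1 hy
    refine finite_branch_inter_of_forall_ge (m := m n) fun k hk hkW => hkW ?_
    exact ⟨n, y, hyn, by rwa [res_length], by rw [res_length]⟩
  · intro z hz
    obtain ⟨n₀, hzn₀⟩ := mem_iUnion.1 hz
    refine finite_branch_inter_of_forall_ge (m := m n₀) ?_
    rintro k hk ⟨n, x, hx, hnk, hxz⟩
    rw [res_length] at hnk hxz
    have hzx : z ∈ PiNat.cylinder x k := res_eq_res_iff_mem_cylinder.1 hxz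
    rcases le_total n n₀ with h | h
    · exact (hm n₀ x (hCm h hx)).notMem_of_mem_left hzn₀ (PiNat.cylinder_anti x hk hzx)
    · exact (hm n x hx).notMem_of_mem_left (hDm h hzn₀) (PiNat.cylinder_anti x hnk hzx)

lemma IsFsigma.exists_monotone {α : Type*} [TopologicalSpace α] {S : Set α} (hS : IsFsigma S) :
    ∃ C : ℕ → Set α, (∀ n, IsClosed (C n)) ∧ Monotone C ∧ S = ⋃ n, C n := by
  obtain ⟨C, hC, rfl⟩ := hS
  refine ⟨accumulate C, fun n => ?_, monotone_accumulate, iUnion_accumulate.symm⟩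
  rw [accumulate_def]
  exact (finite_le_nat n).isClosed_biUnion fun i _ => hC i

lemma exists_separating_of_isFsigma {A B : Set (ℕ → Bool)} (hA : IsFsigma A) (hB : IsFsigma B)
    (hAB : Disjoint A B) :
    ∃ W : Set (List Bool), (∀ y ∈ A, (branch y \ W).Finite) ∧ (∀ z ∈ B, (branch z ∩ W).Finite) := by
  obtain ⟨C, hC, hCm, rfl⟩ := hA.exists_monotone
  obtain ⟨D, hD, hDm, rfl⟩ := hB.exists_monotone
  exact exists_separating_of_monotone_isClosed hC hD hCm hDm fun n =>
    hAB.mono (subset_iUnion C n) (subset_iUnion D n)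

lemma IsGδ.isFsigma_compl {α : Type*} [TopologicalSpace α] {S : Set α} (hS : IsGδ S) :
    IsFsigma Sᶜ := by
  obtain ⟨U, hU, rfl⟩ := isGδ_iff_eq_iInter_nat.1 hS
  exact ⟨fun n => (U n)ᶜ, fun n => (hU n).isClosed_compl, compl_iInter U⟩

theorem stmt19_general (X Y Z : Set (ℕ → Bool))
    (F : Set (ℕ → Bool)) (hFs : IsFsigma F) (hGd : IsGδ F)
    (hYF : Y ⊆ F ∩ X) (hZF : Z ⊆ X \ F) :
    ∃ W : Set (List Bool),
      (∀ y ∈ Y, (branch y \ W).Finite) ∧ (∀ z ∈ Z, (branch z ∩ W).Finite) := by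
  obtain ⟨W, hFW, hFcW⟩ := exists_separating_of_isFsigma hFs hGd.isFsigma_compl disjoint_compl_right
  exact ⟨W, fun y hy => hFW y (hYF hy).1, fun z hz => hFcW z (hZF hz).2⟩

theorem stmt19 (X Y Z : Set (ℕ → Bool)) (hY : Y ⊆ X) (hZ : Z ⊆ X) (hd : Disjoint Y Z)
    (F : Set (ℕ → Bool)) (hFs : IsFsigma F) (hGd : IsGδ F)
    (hYF : Y ⊆ F ∩ X) (hZF : Z ⊆ X \ F) :
    ∃ W : Set (List Bool),
      (∀ y ∈ Y, (branch y \ W).Finite) ∧ (∀ z ∈ Z, (branch z ∩ W).Finite) :=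
  stmt19_general X Y Z F hFs hGd hYF hZF
end
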